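/- Let τ be a primitive substitution with fixed point X and let u, v be prefixes of X with |u| < |v|. Then there exist an integer k ≥ 1 and morphisms λ: R_v → R_u^+ and κ: R_u → R_v^+ such that τ_v ∘ κ = κ ∘ τ_u, τ_u ∘ λ = λ ∘ τ_v, κ ∘ λ = τ_v^k, and λ ∘ κ = τ_u^k. -/

import Mathlib

/-!
Every occurrence of `v` is an occurrence of `u`, so return words on `v` factor over return words
on `u`; this gives `λ`. Once `|τ^k u| ≥ |v|`, the fixed point property sends each occurrence of
`u` after a prefix `x` to an occurrence of `v` at position `|τ^k x|`, so `τ^k` of a return word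
on `u` factors over return words on `v`; this gives `κ`. (On a one-letter alphabet lengths need
not grow, but there every word occurs everywhere.) Finally `Θ_w` is injective, since a
factorisation into return words is forced by the occurrences of `w`, so each of the four
identities reduces to comparing images under `Θ`, where both sides equal `τ^{k+1}`, `τ` or
`τ^k`.
-/

namespace Cobham

open Filter

variable {A : Type*} {B : Type*}

/-- The factor `X_i X_{i+1} ... X_{i+n-1}` of the sequence `X`. -/
def word (X : ℕ → A) (i n : ℕ) : List A := (List.range n).map fun k => X (i + k)

/-- `u` occurs in `X` at position `i`. -/
def OccursAt (X : ℕ → A) (u : List A) (i : ℕ) : Prop := word X i u.length = u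

def IsFactor (X : ℕ → A) (u : List A) : Prop := ∃ i, OccursAt X u i

def IsPrefix (X : ℕ → A) (u : List A) : Prop := OccursAt X u 0

/-- Uniformly recurrent: gaps between successive occurrences of any factor are bounded. -/
def UnifRec (X : ℕ → A) : Prop :=
  ∀ u, IsFactor X u → ∃ g : ℕ, ∀ i : ℕ, ∃ j, i ≤ j ∧ j ≤ i + g ∧ OccursAt X u j

/-- Return words on `u`: factors between two successive occurrences of `u` in `X`. -/
def ReturnWords (X : ℕ → A) (u : List A) : Set (List A) :=
  { v | ∃ i j, OccursAt X u i ∧ OccursAt X u j ∧ i < j ∧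
      (∀ k, i < k → k < j → ¬ OccursAt X u k) ∧ v = word X i (j - i) }

/-- Application of a morphism to a word, by concatenation. -/
def wordApply (σ : A → List B) (w : List A) : List B := w.flatMap σ

/-- Iterate of a morphism. -/
def mPow (σ : A → List A) : ℕ → A → List A
  | 0 => fun a => [a]
  | k + 1 => fun a => wordApply σ (mPow σ k a)

def Nonerasing (σ : A → List A) : Prop := ∀ a, σ a ≠ []

/-- Primitivity: some power of the morphism maps every letter to a word
containing every letter. -/
def Primitive (σ : A → List A) : Prop := ∃ k, 0 < k ∧ ∀ a b : A, b ∈ mPow σ k a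

/-- Primitivity restricted to a set of letters. -/
def PrimitiveOn (σ : A → List A) (S : Set A) : Prop :=
  ∃ k, 0 < k ∧ ∀ a ∈ S, ∀ b ∈ S, b ∈ mPow σ k a

/-- `X` is a fixed point of `σ`: the image of every prefix of `X` is a prefix of `X`. -/
def IsFixedPt (σ : A → List A) (X : ℕ → A) : Prop :=
  ∀ n, OccursAt X (wordApply σ (word X 0 n)) 0

def UltPeriodic (X : ℕ → A) : Prop :=
  ∃ N p : ℕ, 0 < p ∧ ∀ n, N ≤ n → X (n + p) = X n

def Periodic (X : ℕ → A) : Prop := ∃ p : ℕ, 0 < p ∧ ∀ n, X (n + p) = X n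

/-- `u` occurs at position `i` inside the word `w`. -/
def WOcc (u w : List A) (i : ℕ) : Prop :=
  i + u.length ≤ w.length ∧ (w.drop i).take u.length = u

/-- `D` is the derived sequence of `X` on `u`: a sequence of return words on `u`
whose concatenation is `X`. -/
def IsDerived (X : ℕ → A) (u : List A) (D : ℕ → List A) : Prop :=
  (∀ n, D n ∈ ReturnWords X u) ∧ ∀ n, OccursAt X ((word D 0 n).flatten) 0

/-- `τu` is the return substitution of `τ` on `u` (on the alphabet of return words):
`Θ_u ∘ τ_u = τ ∘ Θ_u`. -/
def RetSub (τ : A → List A) (X : ℕ → A) (u : List A)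
    (τu : List A → List (List A)) : Prop :=
  ∀ r ∈ ReturnWords X u,
    (∀ s ∈ τu r, s ∈ ReturnWords X u) ∧ (τu r).flatten = wordApply τ r

/-- Eigenvalue of a complex matrix. -/
def IsEig {n : Type*} [Fintype n] (M : Matrix n n ℂ) (μ : ℂ) : Prop :=
  ∃ v : n → ℂ, v ≠ 0 ∧ M.mulVec v = μ • v

/-- Incidence matrix of a morphism, as a complex matrix. -/
def incMat [Fintype A] [DecidableEq A] (σ : A → List A) : Matrix A A ℂ :=
  Matrix.of fun i j => (((σ j).count i : ℕ) : ℂ)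

/-- Incidence matrix of a return substitution, indexed by the set of return words. -/
def retMat [DecidableEq A] (τu : List A → List (List A)) (S : Set (List A))
    [Fintype S] : Matrix S S ℂ :=
  Matrix.of fun i j => (((τu (j : List A)).count (i : List A) : ℕ) : ℂ)

/-- `α` is the dominant eigenvalue of the incidence matrix of `σ`. -/
def IsDomEig [Fintype A] [DecidableEq A] (σ : A → List A) (α : ℝ) : Prop :=
  IsEig (incMat σ) (α : ℂ) ∧ ∀ μ : ℂ, IsEig (incMat σ) μ → ‖μ‖ ≤ α

/-- `X` is `α`-substitutive: the image under a letter-to-letter morphism of the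
fixed point of a primitive substitution with dominant eigenvalue `α`. -/
def IsSubstitutiveWith {A : Type*} (α : ℝ) (X : ℕ → A) : Prop :=
  ∃ (C : Type) (hF : Fintype C) (hD : DecidableEq C) (σ : C → List C) (c : C)
    (Y : ℕ → C) (ψ : C → A),
    Nonerasing σ ∧ (σ c).head? = some c ∧ Primitive σ ∧
    Y 0 = c ∧ IsFixedPt σ Y ∧ (∀ n, X n = ψ (Y n)) ∧ @IsDomEig C hF hD σ α

/-- Perron number: a real algebraic integer `α ≥ 1` strictly dominating the
absolute values of its other conjugates. -/
def IsPerron (α : ℝ) : Prop :=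
  1 ≤ α ∧ IsIntegral ℤ α ∧
    ∀ β : ℂ, Polynomial.aeval β (minpoly ℤ α) = 0 → β ≠ (α : ℂ) → ‖β‖ < α

section Words

variable {X : ℕ → A} {x y w : List A} {i : ℕ}

theorem length_word (X : ℕ → A) (i n : ℕ) : (word X i n).length = n := by
  simp [word]

theorem occursAt_word (X : ℕ → A) (i n : ℕ) : OccursAt X (word X i n) i := by
  rw [OccursAt, length_word]

theorem word_add (X : ℕ → A) (i m n : ℕ) :
    word X i (m + n) = word X i m ++ word X (i + m) n := by
  simp only [word, List.range_add, List.map_append, List.map_map]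
  congr 1
  exact List.map_congr_left fun k _ => by simp [Nat.add_assoc]

theorem occursAt_append_iff :
    OccursAt X (x ++ y) i ↔ OccursAt X x i ∧ OccursAt X y (i + x.length) := by
  rw [OccursAt, List.length_append, word_add]
  constructor
  · intro h
    exact List.append_inj h (length_word X i x.length)
  · rintro ⟨hx, hy⟩
    rw [hx, hy]

theorem occursAt_iff_word_append : OccursAt X x i ↔ OccursAt X (word X 0 i ++ x) 0 := by
  simp [occursAt_append_iff, occursAt_word, length_word]

theorem OccursAt.of_isPrefix (h : OccursAt X y i) (hxy : x <+: y) : OccursAt X x i := by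
  obtain ⟨t, rfl⟩ := hxy
  exact (occursAt_append_iff.1 h).1

theorem OccursAt.isPrefix_of_length_le (hx : OccursAt X x i) (hy : OccursAt X y i)
    (hle : x.length ≤ y.length) : x <+: y := by
  obtain ⟨t, ht⟩ : ∃ t, word X i y.length = word X i x.length ++ t :=
    ⟨_, by rw [← Nat.add_sub_cancel' hle, word_add]⟩
  exact ⟨t, by rw [← hx, ← hy, ht]⟩

theorem OccursAt.drop (h : OccursAt X x i) {p : ℕ} (hp : p ≤ x.length) :
    OccursAt X (x.drop p) (i + p) := by
  rw [← List.take_append_drop p x, occursAt_append_iff, List.length_take_of_le hp] at h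
  exact h.2

theorem occursAt_of_subsingleton [Subsingleton A] (X : ℕ → A) (w : List A) (i : ℕ) :
    OccursAt X w i :=
  List.ext_getElem (length_word X i w.length) fun _ _ _ => Subsingleton.elim _ _

end Words

section Morphisms

variable {σ : A → List A} {w : List A}

@[simp]
theorem wordApply_singleton (f : A → List B) (a : A) : wordApply f [a] = f a :=
  List.flatMap_singleton f a

@[simp]
theorem wordApply_pure (w : List A) : wordApply (fun a => [a]) w = w :=
  List.flatMap_singleton' w

theorem wordApply_append (f : A → List B) (x y : List A) :
    wordApply f (x ++ y) = wordApply f x ++ wordApply f y :=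
  List.flatMap_append

theorem wordApply_wordApply {C : Type*} (f : B → List C) (g : A → List B) (w : List A) :
    wordApply f (wordApply g w) = wordApply (fun a => wordApply f (g a)) w :=
  List.flatMap_assoc

theorem wordApply_flatten (f : A → List B) (ds : List (List A)) :
    wordApply f ds.flatten = ds.flatMap (wordApply f) := by
  rw [List.flatten_eq_flatMap, wordApply, List.flatMap_assoc]
  rfl

theorem flatten_wordApply (f : A → List (List B)) (w : List A) :
    (wordApply f w).flatten = w.flatMap fun a => (f a).flatten := by
  rw [List.flatten_eq_flatMap, wordApply, List.flatMap_assoc]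
  simp only [List.flatMap_id]

theorem mPow_add (σ : A → List A) (s t : ℕ) (a : A) :
    mPow σ (s + t) a = wordApply (mPow σ s) (mPow σ t a) := by
  induction s with
  | zero => simp [mPow]
  | succ s ih =>
    rw [Nat.add_right_comm]
    change wordApply σ (mPow σ (s + t) a) = _
    rw [ih, wordApply_wordApply]
    rfl

theorem mPow_succ' (σ : A → List A) (k : ℕ) (a : A) :
    mPow σ (k + 1) a = wordApply (mPow σ k) (σ a) := by
  rw [mPow_add]
  simp [mPow]

theorem wordApply_mPow_add (σ : A → List A) (s t : ℕ) (w : List A) :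
    wordApply (mPow σ (s + t)) w = wordApply (mPow σ s) (wordApply (mPow σ t) w) := by
  rw [wordApply_wordApply]
  simp only [← mPow_add]

theorem Nonerasing.wordApply_ne_nil (hσ : Nonerasing σ) (hw : w ≠ []) :
    wordApply σ w ≠ [] := by
  obtain ⟨a, ha⟩ := List.exists_mem_of_ne_nil w hw
  simpa [wordApply] using ⟨a, ha, hσ a⟩

theorem Nonerasing.mPow (hσ : Nonerasing σ) (k : ℕ) : Nonerasing (mPow σ k) := by
  induction k with
  | zero => simp [Nonerasing, Cobham.mPow]
  | succ k ih => exact fun a => hσ.wordApply_ne_nil (ih a)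

theorem mul_length_le_length_wordApply {c : ℕ} (hc : ∀ a, c ≤ (σ a).length) (w : List A) :
    c * w.length ≤ (wordApply σ w).length := by
  induction w with
  | nil => simp [wordApply]
  | cons a w ih =>
    rw [← List.singleton_append, wordApply_append, List.length_append, List.length_append,
      wordApply_singleton, Nat.mul_add]
    have := hc a
    simp only [List.length_singleton, Nat.mul_one]
    omega

/-- Primitivity makes every letter occur in `σ^m(a)`, so on a nontrivial alphabet `σ^m`
at least doubles lengths. -/
theorem Primitive.exists_le_length_wordApply_mPow [Nontrivial A] (hσ : Primitive σ)
    (hw : w ≠ []) (n : ℕ) : ∃ k, 1 ≤ k ∧ n ≤ (wordApply (mPow σ k) w).length := by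
  obtain ⟨m, hm, hall⟩ := hσ
  obtain ⟨b, c, hbc⟩ := exists_pair_ne A
  have htwo : ∀ a, 2 ≤ (mPow σ m a).length := fun a => by
    classical
    calc 2 = ({b, c} : Finset A).card := (Finset.card_pair hbc).symm
      _ ≤ (mPow σ m a).toFinset.card :=
        Finset.card_le_card (by simp [Finset.insert_subset_iff, hall])
      _ ≤ _ := List.toFinset_card_le _
  have hgrow : ∀ t, 2 ^ t ≤ (wordApply (mPow σ (m * t)) w).length := by
    intro t
    induction t with
    | zero => simpa [mPow, Nat.one_le_iff_ne_zero] using hw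
    | succ t ih =>
      rw [Nat.mul_succ, Nat.add_comm (m * t), wordApply_mPow_add, pow_succ']
      exact (Nat.mul_le_mul_left 2 ih).trans (mul_length_le_length_wordApply htwo _)
  refine ⟨m * (n + 1), Nat.mul_pos hm n.succ_pos, ?_⟩
  have := hgrow (n + 1)
  have := Nat.lt_two_pow_self (n := n + 1)
  omega

end Morphisms

section ReturnWords

variable {X : ℕ → A} {w r x : List A}

theorem exists_occursAt_of_mem_returnWords (h : r ∈ ReturnWords X w) :
    ∃ i, OccursAt X w i ∧ OccursAt X (r ++ w) i ∧ r ≠ [] ∧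
      ∀ p, 0 < p → p < r.length → ¬ OccursAt X w (i + p) := by
  obtain ⟨i, j, hi, hj, hij, hbet, rfl⟩ := h
  have hj' : OccursAt X w (i + (j - i)) := by rwa [Nat.add_sub_cancel' hij.le]
  refine ⟨i, hi, occursAt_append_iff.2 ⟨occursAt_word X i _, by rwa [length_word]⟩, ?_, ?_⟩
  · rw [← List.length_pos_iff, length_word]
    omega
  · intro p hp0 hp
    rw [length_word] at hp
    exact hbet _ (by omega) (by omega)

theorem ne_nil_of_mem_returnWords (h : r ∈ ReturnWords X w) : r ≠ [] :=
  (exists_occursAt_of_mem_returnWords h).choose_spec.2.2.1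

theorem isPrefix_append_of_mem_returnWords (h : r ∈ ReturnWords X w) : w <+: r ++ w := by
  obtain ⟨i, hw, hrw, -⟩ := exists_occursAt_of_mem_returnWords h
  exact hw.isPrefix_of_length_le hrw (by simp)

theorem isPrefix_flatten_append {ds : List (List A)} (hds : ∀ d ∈ ds, d ∈ ReturnWords X w) :
    w <+: ds.flatten ++ w := by
  induction ds with
  | nil => simp
  | cons d ds ih =>
    obtain ⟨t, ht⟩ := ih fun e he => hds e (List.mem_cons_of_mem d he)
    rw [List.flatten_cons, List.append_assoc, ← ht, ← List.append_assoc]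
    exact (isPrefix_append_of_mem_returnWords (hds d List.mem_cons_self)).trans
      (List.prefix_append _ _)

theorem not_isPrefix_drop_of_mem_returnWords (hr : r ∈ ReturnWords X w) {z : List A}
    (hz : w <+: z) {p : ℕ} (hp0 : 0 < p) (hp : p < r.length) : ¬ w <+: (r ++ z).drop p := by
  obtain ⟨i, -, hrw, -, hbet⟩ := exists_occursAt_of_mem_returnWords hr
  intro hw
  have hdrop : (r ++ w).drop p <+: (r ++ z).drop p := ((List.prefix_append_right_inj r).2 hz).drop p
  have hw' : w <+: (r ++ w).drop p := List.prefix_of_prefix_length_le hw hdrop (by simp; omega)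
  exact hbet p hp0 hp ((hrw.drop (by simp; omega)).of_isPrefix hw')

/-- Otherwise `w` would occur strictly inside the longer of `d` and `e`. -/
theorem eq_of_append_flatten_eq {d e : List A} (hd : d ∈ ReturnWords X w)
    (he : e ∈ ReturnWords X w) {ds es : List (List A)} (hds : ∀ d ∈ ds, d ∈ ReturnWords X w)
    (hes : ∀ e ∈ es, e ∈ ReturnWords X w) (heq : d ++ ds.flatten = e ++ es.flatten)
    (hle : d.length ≤ e.length) : d = e := by
  rcases hle.eq_or_lt with h | h
  · exact (List.append_inj heq h).1
  · refine absurd ?_ (not_isPrefix_drop_of_mem_returnWords he (isPrefix_flatten_append hes)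
      (List.length_pos_iff.2 (ne_nil_of_mem_returnWords hd)) h)
    have : e ++ (es.flatten ++ w) = d ++ (ds.flatten ++ w) := by
      simp only [← List.append_assoc, heq]
    rw [this, List.drop_left]
    exact isPrefix_flatten_append hds

end ReturnWords

/-- `Θ_w ds = x`, the letters of `ds` being return words on `w`. -/
def IsReturnDecomp (X : ℕ → A) (w x : List A) (ds : List (List A)) : Prop :=
  (∀ d ∈ ds, d ∈ ReturnWords X w) ∧ ds.flatten = x

namespace IsReturnDecomp

variable {X : ℕ → A} {w x : List A} {ds es : List (List A)}

theorem ne_nil (h : IsReturnDecomp X w x ds) (hx : x ≠ []) : ds ≠ [] := by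
  rintro rfl
  exact hx h.2.symm

theorem unique (hds : IsReturnDecomp X w x ds) (hes : IsReturnDecomp X w x es) : ds = es := by
  induction ds generalizing x es with
  | nil =>
    cases es with
    | nil => rfl
    | cons e es =>
      exact absurd (List.append_eq_nil_iff.1 (hes.2.trans hds.2.symm)).1
        (ne_nil_of_mem_returnWords (hes.1 e List.mem_cons_self))
  | cons d ds ih =>
    cases es with
    | nil =>
      exact absurd (List.append_eq_nil_iff.1 (hds.2.trans hes.2.symm)).1
        (ne_nil_of_mem_returnWords (hds.1 d List.mem_cons_self))
    | cons e es =>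
      have heq : d ++ ds.flatten = e ++ es.flatten := hds.2.trans hes.2.symm
      have hd := hds.1 d List.mem_cons_self
      have he := hes.1 e List.mem_cons_self
      have hds' : ∀ d' ∈ ds, d' ∈ ReturnWords X w := fun d' h => hds.1 d' (.tail d h)
      have hes' : ∀ e' ∈ es, e' ∈ ReturnWords X w := fun e' h => hes.1 e' (.tail e h)
      obtain rfl : d = e := by
        rcases le_total d.length e.length with hle | hle
        · exact eq_of_append_flatten_eq hd he hds' hes' heq hle
        · exact (eq_of_append_flatten_eq he hd hes' hds' heq.symm hle).symm
      rw [ih ⟨hds', rfl⟩ ⟨hes', (List.append_cancel_left heq).symm⟩]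

end IsReturnDecomp

section Decomposition

variable {X : ℕ → A} {w x : List A} {i : ℕ}

theorem exists_isReturnDecomp_word {n : ℕ} (hi : OccursAt X w i) (hn : OccursAt X w (i + n)) :
    ∃ ds, IsReturnDecomp X w (word X i n) ds := by
  induction n using Nat.strong_induction_on generalizing i with
  | _ n ih =>
  rcases Nat.eq_zero_or_pos n with rfl | hn0
  · exact ⟨[], by simp [IsReturnDecomp, word]⟩
  classical
  have hex : ∃ p, 0 < p ∧ OccursAt X w (i + p) := ⟨n, hn0, hn⟩
  obtain ⟨hp0, hp⟩ := Nat.find_spec hex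
  have hpn : Nat.find hex ≤ n := Nat.find_min' hex ⟨hn0, hn⟩
  have hret : word X i (Nat.find hex) ∈ ReturnWords X w :=
    ⟨i, i + Nat.find hex, hi, hp, by omega,
      fun k hik hk hocc => Nat.find_min hex (m := k - i) (by omega)
        ⟨by omega, by rwa [Nat.add_sub_cancel' hik.le]⟩,
      by rw [Nat.add_sub_cancel_left]⟩
  obtain ⟨ds, hds, hflat⟩ := ih (n - Nat.find hex) (by omega) hp
    (by rwa [Nat.add_assoc, Nat.add_sub_cancel' hpn])
  refine ⟨word X i (Nat.find hex) :: ds, List.forall_mem_cons.2 ⟨hret, hds⟩, ?_⟩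
  rw [List.flatten_cons, hflat, ← word_add, Nat.add_sub_cancel' hpn]

/-- `Θ_w⁻¹ x`: the factorisation of `x` into return words on `w`, or `[]` if there is none. -/
noncomputable def returnDecomp (X : ℕ → A) (w x : List A) : List (List A) :=
  open Classical in if h : ∃ ds, IsReturnDecomp X w x ds then h.choose else []

theorem isReturnDecomp_returnDecomp (hw : OccursAt X w i) (hxw : OccursAt X (x ++ w) i) :
    IsReturnDecomp X w x (returnDecomp X w x) := by
  obtain ⟨hx, hw'⟩ := occursAt_append_iff.1 hxw
  have hex : ∃ ds, IsReturnDecomp X w x ds := by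
    rw [← (hx : word X i x.length = x)]
    exact exists_isReturnDecomp_word hw hw'
  rw [returnDecomp, dif_pos hex]
  exact hex.choose_spec

end Decomposition

/-- `Θ_{w'} ∘ f = σ ∘ Θ_w` on return words on `w`, with `f` valued in return words
on `w'`. -/
def Realizes (X : ℕ → A) (w w' : List A) (σ : A → List A) (f : List A → List (List A)) :
    Prop :=
  ∀ r ∈ ReturnWords X w, IsReturnDecomp X w' (wordApply σ r) (f r)

namespace Realizes

variable {X : ℕ → A} {w w' w'' : List A} {σ ρ : A → List A} {f g : List A → List (List A)}

theorem comp (hf : Realizes X w w' σ f) (hg : Realizes X w' w'' ρ g) :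
    Realizes X w w'' (fun a => wordApply ρ (σ a)) (fun r => wordApply g (f r)) := by
  intro r hr
  obtain ⟨hmem, hflat⟩ := hf r hr
  refine ⟨fun s hs => ?_, ?_⟩
  · obtain ⟨d, hd, hsd⟩ := List.mem_flatMap.1 hs
    exact (hg d (hmem d hd)).1 s hsd
  · rw [flatten_wordApply, List.flatMap_congr fun d hd => (hg d (hmem d hd)).2,
      ← wordApply_flatten, hflat, wordApply_wordApply]

theorem mPow (hf : Realizes X w w σ f) (k : ℕ) : Realizes X w w (mPow σ k) (mPow f k) := by
  induction k with
  | zero => exact fun r hr => ⟨by simpa [Cobham.mPow] using hr, by simp [Cobham.mPow]⟩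
  | succ k ih => exact ih.comp hf

theorem eq (hf : Realizes X w w' σ f) (hg : Realizes X w w' ρ g) (hσρ : ∀ a, σ a = ρ a)
    {r : List A} (hr : r ∈ ReturnWords X w) : f r = g r :=
  (hf r hr).unique (by simpa only [funext hσρ] using hg r hr)

end Realizes

theorem realizes_returnDecomp_of_isPrefix {X : ℕ → A} {u v : List A} (huv : u <+: v) :
    Realizes X v u (fun a => [a]) (returnDecomp X u) := by
  intro r hr
  obtain ⟨i, hv, hrv, -⟩ := exists_occursAt_of_mem_returnWords hr
  rw [wordApply_pure]
  exact isReturnDecomp_returnDecomp (hv.of_isPrefix huv)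
    (hrv.of_isPrefix ((List.prefix_append_right_inj r).2 huv))

namespace IsFixedPt

variable {τ : A → List A} {X : ℕ → A} {x y u v : List A}

theorem occursAt_wordApply_mPow (hfix : IsFixedPt τ X) (k : ℕ) (hx : OccursAt X x 0) :
    OccursAt X (wordApply (mPow τ k) x) 0 := by
  induction k with
  | zero => simpa [mPow] using hx
  | succ k ih =>
    have := hfix (wordApply (mPow τ k) x).length
    rwa [ih, wordApply_wordApply] at this

theorem occursAt_wordApply_mPow_append (hfix : IsFixedPt τ X) (k : ℕ)
    (hxy : OccursAt X (x ++ y) 0) :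
    OccursAt X (wordApply (mPow τ k) y) (wordApply (mPow τ k) x).length := by
  have := hfix.occursAt_wordApply_mPow k hxy
  rw [wordApply_append, occursAt_append_iff, Nat.zero_add] at this
  exact this.2

theorem occursAt_of_length_le (hfix : IsFixedPt τ X) (hu : IsPrefix X u) (hv : IsPrefix X v)
    {k : ℕ} (hk : v.length ≤ (wordApply (mPow τ k) u).length) (hxu : OccursAt X (x ++ u) 0) :
    OccursAt X v (wordApply (mPow τ k) x).length :=
  (hfix.occursAt_wordApply_mPow_append k hxu).of_isPrefix
    (OccursAt.isPrefix_of_length_le hv (hfix.occursAt_wordApply_mPow k hu) hk)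

theorem realizes_returnDecomp_mPow (hfix : IsFixedPt τ X) {k : ℕ}
    (htr : ∀ x, OccursAt X (x ++ u) 0 → OccursAt X v (wordApply (mPow τ k) x).length) :
    Realizes X u v (mPow τ k) (fun r => returnDecomp X v (wordApply (mPow τ k) r)) := by
  intro r hr
  obtain ⟨i, hu, hru, -⟩ := exists_occursAt_of_mem_returnWords hr
  rw [occursAt_iff_word_append, ← List.append_assoc] at hru
  rw [occursAt_iff_word_append] at hu
  refine isReturnDecomp_returnDecomp (htr _ hu) (occursAt_append_iff.2
    ⟨hfix.occursAt_wordApply_mPow_append k (occursAt_append_iff.1 hru).1, ?_⟩)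
  simpa [wordApply_append] using htr _ hru

end IsFixedPt

theorem stmt8_general {A : Type*} (τ : A → List A) (X : ℕ → A)
    (hne : Nonerasing τ) (hprim : Primitive τ)
    (hfix : IsFixedPt τ X)
    (u v : List A) (hu : u ≠ []) (hpu : IsPrefix X u) (hpv : IsPrefix X v)
    (hlen : u.length < v.length)
    (τu τv : List A → List (List A))
    (hτu : RetSub τ X u τu) (hτv : RetSub τ X v τv) :
    ∃ k : ℕ, 1 ≤ k ∧ ∃ lam kap : List A → List (List A),
      (∀ r ∈ ReturnWords X v, lam r ≠ [] ∧ ∀ s ∈ lam r, s ∈ ReturnWords X u) ∧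
      (∀ r ∈ ReturnWords X u, kap r ≠ [] ∧ ∀ s ∈ kap r, s ∈ ReturnWords X v) ∧
      (∀ r ∈ ReturnWords X u, wordApply τv (kap r) = wordApply kap (τu r)) ∧
      (∀ r ∈ ReturnWords X v, wordApply τu (lam r) = wordApply lam (τv r)) ∧
      (∀ r ∈ ReturnWords X v, wordApply kap (lam r) = mPow τv k r) ∧
      (∀ r ∈ ReturnWords X u, wordApply lam (kap r) = mPow τu k r) := by
  obtain ⟨k, hk, htr⟩ : ∃ k, 1 ≤ k ∧
      ∀ x, OccursAt X (x ++ u) 0 → OccursAt X v (wordApply (mPow τ k) x).length := by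
    rcases subsingleton_or_nontrivial A with hA | hA
    · exact ⟨1, le_rfl, fun _ _ => occursAt_of_subsingleton X v _⟩
    · obtain ⟨k, hk, hkv⟩ := hprim.exists_le_length_wordApply_mPow hu v.length
      exact ⟨k, hk, fun x => hfix.occursAt_of_length_le hpu hpv hkv⟩
  have hlam : Realizes X v u (fun a => [a]) (returnDecomp X u) :=
    realizes_returnDecomp_of_isPrefix (OccursAt.isPrefix_of_length_le hpu hpv hlen.le)
  have hkap := hfix.realizes_returnDecomp_mPow htr
  have hτu : Realizes X u u τ τu := hτu
  have hτv : Realizes X v v τ τv := hτv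
  refine ⟨k, hk, returnDecomp X u, fun r => returnDecomp X v (wordApply (mPow τ k) r),
    fun r hr => ⟨(hlam r hr).ne_nil (by simpa using ne_nil_of_mem_returnWords hr),
      (hlam r hr).1⟩,
    fun r hr => ⟨(hkap r hr).ne_nil
      ((hne.mPow k).wordApply_ne_nil (ne_nil_of_mem_returnWords hr)), (hkap r hr).1⟩,
    fun r hr => (hkap.comp hτv).eq (hτu.comp hkap) (fun a => mPow_succ' τ k a) hr,
    fun r hr => (hlam.comp hτu).eq (hτv.comp hlam) (by simp) hr,
    fun r hr => (hlam.comp hkap).eq (hτv.mPow k) (by simp) hr,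
    fun r hr => (hkap.comp hlam).eq (hτu.mPow k) (by simp) hr⟩

theorem stmt8 {A : Type*} (τ : A → List A) (a : A) (X : ℕ → A)
    (hne : Nonerasing τ) (hhead : (τ a).head? = some a) (hprim : Primitive τ)
    (hX0 : X 0 = a) (hfix : IsFixedPt τ X)
    (u v : List A) (hu : u ≠ []) (hpu : IsPrefix X u) (hpv : IsPrefix X v)
    (hlen : u.length < v.length)
    (τu τv : List A → List (List A))
    (hτu : RetSub τ X u τu) (hτv : RetSub τ X v τv) :
    ∃ k : ℕ, 1 ≤ k ∧ ∃ lam kap : List A → List (List A),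
      (∀ r ∈ ReturnWords X v, lam r ≠ [] ∧ ∀ s ∈ lam r, s ∈ ReturnWords X u) ∧
      (∀ r ∈ ReturnWords X u, kap r ≠ [] ∧ ∀ s ∈ kap r, s ∈ ReturnWords X v) ∧
      (∀ r ∈ ReturnWords X u, wordApply τv (kap r) = wordApply kap (τu r)) ∧
      (∀ r ∈ ReturnWords X v, wordApply τu (lam r) = wordApply lam (τv r)) ∧
      (∀ r ∈ ReturnWords X v, wordApply kap (lam r) = mPow τv k r) ∧
      (∀ r ∈ ReturnWords X u, wordApply lam (kap r) = mPow τu k r) :=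
  stmt8_general τ X hne hprim hfix u v hu hpu hpv hlen τu τv hτu hτv

end Cobham
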